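/- arXiv:1709.02924 — 2 statements merged into one kernel-verified Lean document; each statement's English description precedes it below -/
import Mathlib

section
/- The block matrix A = [[0, I], [−K₁, −K₂]] with K₁, K₂ symmetric positive definite is Hurwitz: every eigenvalue of A has strictly negative real part. -/
/-!
An eigenvector `(x, y)` of `[[0, I], [−K₁, −K₂]]` for `μ` has `y = μ x` and
`μ² x + μ K₂ x + K₁ x = 0` with `x ≠ 0`. Pairing with `x̄` gives `a μ² + b μ + c = 0` with
`a = x̄ᵀx`, `b = x̄ᵀK₂x`, `c = x̄ᵀK₁x` all positive reals, and such a quadratic has its roots in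
the open left half-plane.
-/

open Matrix
open scoped ComplexOrder

theorem Complex.re_neg_of_mul_sq_add_mul_add_eq_zero {a b c μ : ℂ} (ha : 0 < a) (hb : 0 < b)
    (hc : 0 < c) (h : a * μ ^ 2 + b * μ + c = 0) : μ.re < 0 := by
  rw [Complex.pos_iff] at ha hb hc
  have hre := congrArg Complex.re h
  have him := congrArg Complex.im h
  simp only [Complex.add_re, Complex.add_im, Complex.mul_re, Complex.mul_im, sq,
    ← ha.2, ← hb.2, ← hc.2, Complex.zero_re, Complex.zero_im] at hre him
  -- a non-real root has real part `-b / 2a`; a real root of a positive-coefficient quadratic is negative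
  have him' : μ.im * (2 * a.re * μ.re + b.re) = 0 := by linear_combination him
  rcases mul_eq_zero.mp him' with h0 | h0
  · rw [h0] at hre
    nlinarith [sq_nonneg μ.re]
  · nlinarith

namespace Matrix

variable {n : Type*} [Fintype n]

theorem re_star_dotProduct_map_ofReal_mulVec (K : Matrix n n ℝ) (x : n → ℂ) :
    (star x ⬝ᵥ (K.map (↑) *ᵥ x)).re =
      (fun i ↦ (x i).re) ⬝ᵥ K *ᵥ (fun i ↦ (x i).re) +
        (fun i ↦ (x i).im) ⬝ᵥ K *ᵥ (fun i ↦ (x i).im) := by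
  simp [dotProduct, mulVec, Complex.re_sum, Finset.mul_sum, ← Finset.sum_add_distrib]

theorem im_star_dotProduct_map_ofReal_mulVec (K : Matrix n n ℝ) (x : n → ℂ) :
    (star x ⬝ᵥ (K.map (↑) *ᵥ x)).im =
      (fun i ↦ (x i).re) ⬝ᵥ K *ᵥ (fun i ↦ (x i).im) -
        (fun i ↦ (x i).im) ⬝ᵥ K *ᵥ (fun i ↦ (x i).re) := by
  simp [dotProduct, mulVec, Complex.im_sum, Finset.mul_sum, Finset.sum_add_distrib, sub_eq_add_neg]

theorem IsSymm.dotProduct_mulVec_comm {R : Type*} [CommSemiring R] {K : Matrix n n R}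
    (hK : K.IsSymm) (v w : n → R) : v ⬝ᵥ K *ᵥ w = w ⬝ᵥ K *ᵥ v := by
  rw [dotProduct_mulVec, ← mulVec_transpose, hK.eq, dotProduct_comm]

theorem PosDef.map_ofReal {K : Matrix n n ℝ} (hK : K.PosDef) :
    (K.map ((↑) : ℝ → ℂ)).PosDef := by
  refine of_dotProduct_mulVec_pos (hK.isHermitian.map _ fun _ ↦ (Complex.conj_ofReal _).symm)
    fun x hx ↦ ?_
  have hsymm : K.IsSymm := isHermitian_iff_isSymm.mp hK.isHermitian
  rw [Complex.pos_iff, re_star_dotProduct_map_ofReal_mulVec, im_star_dotProduct_map_ofReal_mulVec,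
    hsymm.dotProduct_mulVec_comm (fun i ↦ (x i).re) (fun i ↦ (x i).im), sub_self]
  refine ⟨?_, rfl⟩
  have hnonneg (v : n → ℝ) : 0 ≤ v ⬝ᵥ K *ᵥ v := by
    simpa using hK.posSemidef.dotProduct_mulVec_nonneg v
  have hpos {v : n → ℝ} (hv : v ≠ 0) : 0 < v ⬝ᵥ K *ᵥ v := by
    simpa using hK.dotProduct_mulVec_pos hv
  obtain h | h : (fun i ↦ (x i).re) ≠ 0 ∨ (fun i ↦ (x i).im) ≠ 0 := by
    by_contra! h
    exact hx (funext fun i ↦ Complex.ext (congrFun h.1 i) (congrFun h.2 i))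
  · exact add_pos_of_pos_of_nonneg (hpos h) (hnonneg _)
  · exact add_pos_of_nonneg_of_pos (hnonneg _) (hpos h)

/-- `μ` is an eigenvalue of the quadratic pencil `μ² + μ D + K` (damping `D`, stiffness `K`). -/
def IsQuadraticEigenvalue {R : Type*} [CommRing R] (D K : Matrix n n R) (μ : R) : Prop :=
  ∃ x ≠ 0, μ ^ 2 • x + μ • (D *ᵥ x) + K *ᵥ x = 0

theorem isQuadraticEigenvalue_of_mem_spectrum_fromBlocks {F : Type*} [Field F] [DecidableEq n]
    {D K : Matrix n n F} {μ : F} (hμ : μ ∈ spectrum F (fromBlocks (0 : Matrix n n F) 1 (-K) (-D))) :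
    IsQuadraticEigenvalue D K μ := by
  rw [← spectrum_toLin'] at hμ
  obtain ⟨v, hv⟩ := (Module.End.HasEigenvalue.of_mem_spectrum hμ).exists_hasEigenvector
  obtain ⟨x, y, rfl⟩ : ∃ x y, v = x ⊕ᵥ y := ⟨_, _, (Sum.elim_comp_inl_inr v).symm⟩
  have hAv := hv.apply_eq_smul
  rw [toLin'_apply, fromBlocks_mulVec] at hAv
  have hy : y = μ • x := funext fun i ↦ by simpa using congrFun hAv (.inl i)
  have hK : -K *ᵥ x + -D *ᵥ y = μ • y := funext fun i ↦ by simpa using congrFun hAv (.inr i)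
  subst hy
  refine ⟨x, fun hx ↦ hv.2 (by simp [hx]), ?_⟩
  rw [neg_mulVec, neg_mulVec, mulVec_smul, smul_smul, ← sq] at hK
  rw [← hK]
  abel

theorem IsQuadraticEigenvalue.re_neg {D K : Matrix n n ℂ} {μ : ℂ} (hD : D.PosDef)
    (hK : K.PosDef) (hμ : IsQuadraticEigenvalue D K μ) : μ.re < 0 := by
  obtain ⟨x, hx, hμx⟩ := hμ
  have hpair := congrArg (star x ⬝ᵥ ·) hμx
  simp only [dotProduct_add, dotProduct_smul, smul_eq_mul, dotProduct_zero] at hpair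
  exact Complex.re_neg_of_mul_sq_add_mul_add_eq_zero (dotProduct_star_self_pos_iff.mpr hx)
    (hD.dotProduct_mulVec_pos hx) (hK.dotProduct_mulVec_pos hx) (by linear_combination hpair)

end Matrix

/-- The block matrix `A = [[0, I], [−K₁, −K₂]]` with `K₁, K₂` symmetric positive
definite is Hurwitz: every (complex) eigenvalue of `A` has strictly negative real
part. -/
theorem companion_block_hurwitz {n : ℕ} (K₁ K₂ : Matrix (Fin n) (Fin n) ℝ)
    (hK₁ : K₁.PosDef) (hK₂ : K₂.PosDef) :
    ∀ μ ∈ spectrum ℂ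
      (((Matrix.fromBlocks 0 1 (-K₁) (-K₂) :
          Matrix (Fin n ⊕ Fin n) (Fin n ⊕ Fin n) ℝ)).map (Complex.ofReal ·)),
      μ.re < 0 := by
  intro μ hμ
  rw [fromBlocks_map, Matrix.map_zero _ Complex.ofReal_zero,
    Matrix.map_one _ Complex.ofReal_zero Complex.ofReal_one, Matrix.map_neg _ Complex.ofReal_neg,
    Matrix.map_neg _ Complex.ofReal_neg] at hμ
  exact (isQuadraticEigenvalue_of_mem_spectrum_fromBlocks hμ).re_neg hK₂.map_ofReal
    hK₁.map_ofReal
end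

section
/- If n ≥ 3 contact points p₁, …, p_n ∈ ℝ³ are non-collinear, then the grasp map G = [G₁, …, G_n] ∈ ℝ^{6×3n}, with Gᵢ having blocks I and (pᵢ − p₀)×, has full row rank 6. -/
open Matrix

/-- If `n ≥ 3` contact points `p₁, …, p_n ∈ ℝ³` are non-collinear, then the grasp map
`G = [G₁, …, G_n]` (with `Gᵢᵀ = [I, −(pᵢ−p₀)×]`) has full row rank 6: `Gᵀ w = 0` for the
wrench `w = (f, m)`, i.e. `f − (pᵢ−p₀) × m = 0` for all `i`, implies `f = 0` and
`m = 0`. -/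
theorem grasp_map_full_row_rank {n : ℕ} (hn : 3 ≤ n)
    (p : Fin n → (Fin 3 → ℝ)) (p₀ : Fin 3 → ℝ)
    (hnc : ¬ Collinear ℝ (Set.range p))
    (f m : Fin 3 → ℝ)
    (h : ∀ i, f - crossProduct (p i - p₀) m = 0) :
    f = 0 ∧ m = 0 := by
  by_cases hm : m = 0
  · subst hm
    have h0 := h ⟨0, by omega⟩
    simp only [map_zero, sub_zero] at h0
    exact ⟨h0, rfl⟩
  · exfalso
    apply hnc
    rw [collinear_iff_of_mem (Set.mem_range_self (⟨0, by omega⟩ : Fin n))]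
    refine ⟨m, ?_⟩
    rintro _ ⟨i, rfl⟩
    have hcross : crossProduct (p i - p ⟨0, by omega⟩) m = 0 := by
      have hi := h i
      have h0 := h ⟨0, by omega⟩
      have : crossProduct (p i - p₀) m = crossProduct (p ⟨0, by omega⟩ - p₀) m := by
        have := sub_eq_zero.mp hi
        have h0' := sub_eq_zero.mp h0
        rw [← this, ← h0']
      have key : p i - p ⟨0, by omega⟩ = (p i - p₀) - (p ⟨0, by omega⟩ - p₀) := by abel
      rw [key, map_sub, LinearMap.sub_apply, this, sub_self]
    have hnli : ¬ LinearIndependent ℝ ![p i - p ⟨0, by omega⟩, m] := by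
      intro hli
      exact (crossProduct_ne_zero_iff_linearIndependent.mpr hli) hcross
    rw [linearIndependent_fin2] at hnli
    push_neg at hnli
    simp only [Matrix.cons_val_one, Matrix.head_cons, Matrix.cons_val_zero] at hnli
    obtain ⟨r, hr⟩ := hnli hm
    exact ⟨r, by rw [hr]; simp⟩
end
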